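/- arXiv:1511.03133 — 4 statements merged into one kernel-verified Lean document; each statement's English description precedes it below -/
import Mathlib

section
/- Let F : ℂⁿ → ℂⁿ be a polynomial mapping. Then the union K₀(F) ∪ S_F of the set of critical values and the asymptotic set is a closed subset of ℂⁿ, and moreover K₀(F) ∪ S_F = cl(K₀(F)) ∪ S_F. -/
/-!
The asymptotic set `S_F` is the set of cluster points of `F` along the cocompact filter, hence
closed. If a point `y` in the closure of the image `F(C)` of a closed set is not such a cluster
point, some open neighbourhood `U` of `y` has `F⁻¹(U)` inside a compact set `K`; then `y` lies
in the closure of the compact, hence closed, set `F(K ∩ C) ⊆ F(C)`. Applied to the closed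
critical locus `{det J_F = 0}` this gives `cl(K₀(F)) ⊆ K₀(F) ∪ S_F`.
-/

open Filter Topology

/-- Evaluation of a polynomial mapping `F : ℂⁿ → ℂⁿ` given by its coordinate
polynomials `P i`. -/
noncomputable def evalMap {n : ℕ} (P : Fin n → MvPolynomial (Fin n) ℂ)
    (x : Fin n → ℂ) : Fin n → ℂ :=
  fun i => MvPolynomial.eval x (P i)

/-- The Jacobian determinant of the polynomial mapping determined by `P`. -/
noncomputable def jacDet {n : ℕ} (P : Fin n → MvPolynomial (Fin n) ℂ)
    (x : Fin n → ℂ) : ℂ :=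
  Matrix.det (Matrix.of fun i j => MvPolynomial.eval x (MvPolynomial.pderiv j (P i)))

/-- The set of critical values `K₀(F)`. -/
noncomputable def K0 {n : ℕ} (P : Fin n → MvPolynomial (Fin n) ℂ) : Set (Fin n → ℂ) :=
  evalMap P '' {x | jacDet P x = 0}

/-- The asymptotic set `S_F` of a mapping `F : ℂⁿ → ℂⁿ`. -/
def SF {n : ℕ} (F : (Fin n → ℂ) → (Fin n → ℂ)) : Set (Fin n → ℂ) :=
  {a | ∃ x : ℕ → (Fin n → ℂ), Tendsto (fun k => ‖x k‖) atTop atTop ∧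
    Tendsto (fun k => F (x k)) atTop (𝓝 a)}

open Set

theorem closure_image_subset_union_mapClusterPt {X Y : Type*} [TopologicalSpace X]
    [TopologicalSpace Y] [T2Space Y] {f : X → Y} (hf : Continuous f) {C : Set X}
    (hC : IsClosed C) :
    closure (f '' C) ⊆ f '' C ∪ {y | MapClusterPt y (cocompact X) f} := by
  intro y hy
  refine or_iff_not_imp_right.2 fun hy_not => ?_
  obtain ⟨U, hyU, hU, K, hK, hUK⟩ : ∃ U, y ∈ U ∧ IsOpen U ∧
      ∃ K, IsCompact K ∧ ∀ ⦃x⦄, x ∉ K → f x ∉ U := by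
    simpa [(nhds_basis_opens y).mapClusterPt_iff_frequently, Filter.not_frequently,
      hasBasis_cocompact.eventually_iff, subset_def] using hy_not
  have hUC : U ∩ f '' C ⊆ f '' (K ∩ C) := by
    rintro _ ⟨hxU, x, hxC, rfl⟩
    exact ⟨x, ⟨not_not.1 fun hxK => hUK hxK hxU, hxC⟩, rfl⟩
  have hKC : IsClosed (f '' (K ∩ C)) := ((hK.inter_right hC).image hf).isClosed
  have : y ∈ f '' (K ∩ C) := hKC.closure_subset_iff.2 hUC (hU.inter_closure ⟨hyU, hy⟩)
  exact image_mono inter_subset_right this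

theorem SF_eq_setOf_mapClusterPt {n : ℕ} (F : (Fin n → ℂ) → (Fin n → ℂ)) :
    SF F = {a | MapClusterPt a (cocompact (Fin n → ℂ)) F} := by
  ext a
  rw [← Metric.cobounded_eq_cocompact, ← comap_norm_atTop]
  constructor
  · rintro ⟨x, hx, hFx⟩
    exact hFx.mapClusterPt.of_comp (tendsto_comap_iff.2 hx)
  · intro ha
    obtain ⟨x, hFx, hx⟩ := ha.exists_seq_tendsto
    exact ⟨x, tendsto_comap_iff.1 hx, hFx⟩

theorem isClosed_SF {n : ℕ} (F : (Fin n → ℂ) → (Fin n → ℂ)) : IsClosed (SF F) :=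
  SF_eq_setOf_mapClusterPt F ▸ isClosed_setOfPred_clusterPt

theorem continuous_evalMap {n : ℕ} (P : Fin n → MvPolynomial (Fin n) ℂ) :
    Continuous (evalMap P) :=
  continuous_pi fun _ => MvPolynomial.continuous_eval _

theorem continuous_jacDet {n : ℕ} (P : Fin n → MvPolynomial (Fin n) ℂ) :
    Continuous (jacDet P) :=
  (continuous_matrix fun _ _ => MvPolynomial.continuous_eval _).matrix_det

/-- `K₀(F) ∪ S_F` is closed and equals `cl(K₀(F)) ∪ S_F`. -/
theorem K0_union_SF_isClosed {n : ℕ} (P : Fin n → MvPolynomial (Fin n) ℂ) :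
    IsClosed (K0 P ∪ SF (evalMap P)) ∧
      K0 P ∪ SF (evalMap P) = closure (K0 P) ∪ SF (evalMap P) := by
  have hK0 : closure (K0 P) ⊆ K0 P ∪ SF (evalMap P) := by
    rw [SF_eq_setOf_mapClusterPt]
    exact closure_image_subset_union_mapClusterPt (continuous_evalMap P)
      (isClosed_eq (continuous_jacDet P) continuous_const)
  have heq : K0 P ∪ SF (evalMap P) = closure (K0 P) ∪ SF (evalMap P) :=
    subset_antisymm (union_subset_union_left _ subset_closure)
      (union_subset hK0 subset_union_right)
  exact ⟨heq ▸ isClosed_closure.union (isClosed_SF _), heq⟩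
end

section
/- Let F : ℂ³ → ℂ³ be defined by F(x₁,x₂,x₃) = (x₁³ − x₁x₂x₃, x₂x₃, x₃x₁). Then the set K₀(F) of critical values of F equals (𝒮) ∪ (axis 0α₁) ∪ (axis 0α₂), where (𝒮) = { (α₁,α₂,α₃) : 27α₁² = 4α₂³, α₁ ≠ 0, α₂ ≠ 0, α₃ ≠ 0 }, 0α₁ = { (t,0,0) : t ∈ ℂ }, and 0α₂ = { (0,t,0) : t ∈ ℂ }. -/
open Filter Topology

open MvPolynomial in
/-- The coordinate polynomials of `F(x₁,x₂,x₃) = (x₁³ - x₁x₂x₃, x₂x₃, x₃x₁)`. -/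
noncomputable def P3 : Fin 3 → MvPolynomial (Fin 3) ℂ :=
  ![X 0 ^ 3 - X 0 * X 1 * X 2, X 1 * X 2, X 2 * X 0]

/-! On the critical locus `x₁x₃(3x₁² − x₂x₃) = 0` the map `F` is easy to read off. On `x₁ = 0` it is
`(0, x₂x₃, 0)` and on `x₃ = 0` it is `(x₁³, 0, 0)`, sweeping out the two axes. On the remaining
component `x₂x₃ = 3x₁²` it is `(−2x₁³, 3x₁², x₃x₁)`: the first two coordinates run over the
parametrised cusp `(−2t³, 3t²)`, i.e. `27α₁² = 4α₂³`, and the third over all of `ℂ^*`. -/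

lemma cusp_iff_exists_param {K : Type*} [Field K] [NeZero (2 : K)] [NeZero (3 : K)] {a b : K} :
    (27 * a ^ 2 = 4 * b ^ 3 ∧ a ≠ 0 ∧ b ≠ 0) ↔ ∃ t ≠ 0, a = -2 * t ^ 3 ∧ b = 3 * t ^ 2 := by
  constructor
  · rintro ⟨hcusp, ha, hb⟩
    refine ⟨-(3 * a) / (2 * b), by simp [ha, hb, two_ne_zero, three_ne_zero], ?_, ?_⟩
    · field_simp
      linear_combination -hcusp
    · field_simp
      linear_combination -hcusp
  · rintro ⟨t, ht, rfl, rfl⟩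
    refine ⟨by ring, ?_, ?_⟩ <;> simp [ht, two_ne_zero, three_ne_zero]

lemma evalMap_P3_eq_iff (x a : Fin 3 → ℂ) :
    evalMap P3 x = a ↔
      x 0 ^ 3 - x 0 * x 1 * x 2 = a 0 ∧ x 1 * x 2 = a 1 ∧ x 2 * x 0 = a 2 := by
  simp [funext_iff, Fin.forall_fin_succ, evalMap, P3]

lemma jacDet_P3 (x : Fin 3 → ℂ) :
    jacDet P3 x = x 0 * x 2 * (3 * x 0 ^ 2 - x 1 * x 2) := by
  simp [jacDet, P3, Matrix.det_fin_three, MvPolynomial.pderiv_X, Fin.ext_iff]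
  ring

lemma jacDet_P3_eq_zero_set :
    {x | jacDet P3 x = 0} =
      {x : Fin 3 → ℂ | x 0 ≠ 0 ∧ x 2 ≠ 0 ∧ x 1 * x 2 = 3 * x 0 ^ 2} ∪ {x | x 2 = 0} ∪
        {x | x 0 = 0} := by
  ext x
  simp only [Set.mem_ofPred_eq, Set.mem_union, jacDet_P3, mul_eq_zero, sub_eq_zero]
  tauto

lemma evalMap_P3_image_cuspComponent :
    evalMap P3 '' {x | x 0 ≠ 0 ∧ x 2 ≠ 0 ∧ x 1 * x 2 = 3 * x 0 ^ 2} =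
      {a | 27 * a 0 ^ 2 = 4 * a 1 ^ 3 ∧ a 0 ≠ 0 ∧ a 1 ≠ 0 ∧ a 2 ≠ 0} := by
  ext a
  simp only [Set.mem_image, Set.mem_ofPred_eq, evalMap_P3_eq_iff]
  constructor
  · rintro ⟨x, ⟨hx0, hx2, hcrit⟩, ha0, ha1, ha2⟩
    obtain ⟨hcusp, ha0, ha1⟩ := (cusp_iff_exists_param (a := a 0) (b := a 1)).mpr
      ⟨x 0, hx0, by linear_combination -ha0 - x 0 * hcrit, by rw [← ha1, hcrit]⟩
    exact ⟨hcusp, ha0, ha1, ha2 ▸ mul_ne_zero hx2 hx0⟩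
  · rintro ⟨hcusp, ha0, ha1, ha2⟩
    obtain ⟨t, ht, hat, hbt⟩ := cusp_iff_exists_param.mp ⟨hcusp, ha0, ha1⟩
    refine ⟨![t, 3 * t ^ 3 / a 2, a 2 / t], ?_, ?_⟩ <;>
      simp only [Matrix.cons_val_zero, Matrix.cons_val_one, Matrix.cons_val_two,
        Matrix.head_cons, Matrix.tail_cons]
    · exact ⟨ht, div_ne_zero ha2 ht, by field_simp⟩
    · refine ⟨?_, ?_, ?_⟩ <;> field_simp
      · linear_combination -hat
      · linear_combination -hbt

lemma evalMap_P3_image_x2_eq_zero :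
    evalMap P3 '' {x | x 2 = 0} = {a | a 1 = 0 ∧ a 2 = 0} := by
  ext a
  simp only [Set.mem_image, Set.mem_ofPred_eq, evalMap_P3_eq_iff]
  constructor
  · rintro ⟨x, hx2, -, ha1, ha2⟩
    simp [← ha1, ← ha2, hx2]
  · rintro ⟨ha1, ha2⟩
    obtain ⟨c, hc⟩ := IsAlgClosed.exists_pow_nat_eq (a 0) three_pos
    exact ⟨![c, 0, 0], rfl, by simp [hc, ha1, ha2]⟩

lemma evalMap_P3_image_x0_eq_zero :
    evalMap P3 '' {x | x 0 = 0} = {a | a 0 = 0 ∧ a 2 = 0} := by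
  ext a
  simp only [Set.mem_image, Set.mem_ofPred_eq, evalMap_P3_eq_iff]
  constructor
  · rintro ⟨x, hx0, ha0, -, ha2⟩
    simp [← ha0, ← ha2, hx0]
  · rintro ⟨ha0, ha2⟩
    exact ⟨![0, a 1, 1], rfl, by simp [ha0, ha2]⟩

/-- `K₀(F) = (𝒮) ∪ 0α₁ ∪ 0α₂` for `F = (x₁³ - x₁x₂x₃, x₂x₃, x₃x₁)`,
where `(𝒮) = {27α₁² = 4α₂³, α₁ ≠ 0, α₂ ≠ 0, α₃ ≠ 0}` and `0α₁`, `0α₂` are the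
first two coordinate axes. -/
theorem K0_P3 :
    K0 P3 =
      {a : Fin 3 → ℂ | 27 * a 0 ^ 2 = 4 * a 1 ^ 3 ∧ a 0 ≠ 0 ∧ a 1 ≠ 0 ∧ a 2 ≠ 0} ∪
      {a : Fin 3 → ℂ | a 1 = 0 ∧ a 2 = 0} ∪
      {a : Fin 3 → ℂ | a 0 = 0 ∧ a 2 = 0} := by
  rw [K0, jacDet_P3_eq_zero_set, Set.image_union, Set.image_union,
    evalMap_P3_image_cuspComponent, evalMap_P3_image_x2_eq_zero, evalMap_P3_image_x0_eq_zero]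
end

section
/- Let F : ℂ³ → ℂ³ be defined by F(x₁,x₂,x₃) = (x₁³ − x₁x₂x₃, x₂x₃, x₃x₁). Then the set K₀(F) of critical values of F is not closed in ℂ³: the point (2/(3√3), 1, 0) (a point of the curve 27α₁² = 4α₂³ in the plane α₃ = 0 with α₁, α₂ ≠ 0) lies in the closure of K₀(F) but not in K₀(F). -/
/-!
Along the critical curve `t ↦ (c, 1/t, t)` with `3c² = 1` the map `F` takes the values
`(c³ - c, 1, ct)`, which tend to `(c³ - c, 1, 0)` as `t → 0`. Yet no point `(a, b, 0)` with
`a, b ≠ 0` is a value of `F` at all: `x₂x₃ = b` forces `x₃ ≠ 0`, so `x₃x₁ = 0` forces `x₁ = 0`,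
and then the first coordinate vanishes. For `c = -1/√3` the limit is `(2/(3√3), 1, 0)`.
-/

open Filter Topology

lemma evalMap_P3 (x : Fin 3 → ℂ) :
    evalMap P3 x = ![x 0 ^ 3 - x 0 * x 1 * x 2, x 1 * x 2, x 2 * x 0] := by
  funext i
  fin_cases i <;> simp [evalMap, P3]

lemma evalMap_P3_mem_K0 {x : Fin 3 → ℂ} (hx : 3 * x 0 ^ 2 = x 1 * x 2) :
    evalMap P3 x ∈ K0 P3 :=
  ⟨x, by simp [jacDet_P3, hx], rfl⟩

lemma mem_closure_K0_P3 {c : ℂ} (hc : 3 * c ^ 2 = 1) :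
    ![c ^ 3 - c, 1, 0] ∈ closure (K0 P3) := by
  have hcurve : ∀ t : ℂ, t ≠ 0 → evalMap P3 ![c, t⁻¹, t] = ![c ^ 3 - c, 1, c * t] := by
    intro t ht
    rw [evalMap_P3]
    funext i
    fin_cases i <;> simp <;> field_simp
  have hlim : Tendsto (fun t : ℂ => ![c ^ 3 - c, 1, c * t]) (𝓝[≠] 0) (𝓝 ![c ^ 3 - c, 1, 0]) := by
    have hcont : Continuous fun t : ℂ => ![c ^ 3 - c, 1, c * t] := by fun_prop
    simpa using (hcont.tendsto 0).mono_left nhdsWithin_le_nhds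
  refine mem_closure_of_tendsto hlim (eventually_nhdsWithin_of_forall fun t (ht : t ≠ 0) => ?_)
  rw [← hcurve t ht]
  exact evalMap_P3_mem_K0 (by simp [ht, hc])

lemma notMem_range_evalMap_P3 {a b : ℂ} (ha : a ≠ 0) (hb : b ≠ 0) :
    ![a, b, 0] ∉ Set.range (evalMap P3) := by
  rintro ⟨x, hx⟩
  rw [evalMap_P3] at hx
  have h0 : x 0 ^ 3 - x 0 * x 1 * x 2 = a := congrFun hx 0
  have h1 : x 1 * x 2 = b := congrFun hx 1
  have h2 : x 2 * x 0 = 0 := congrFun hx 2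
  have hx2 : x 2 ≠ 0 := right_ne_zero_of_mul (h1 ▸ hb)
  have hx0 : x 0 = 0 := (mul_eq_zero.mp h2).resolve_left hx2
  exact ha (by simp [← h0, hx0])

/-- the point `(2/(3√3), 1, 0)` lies in the closure of `K₀(F)`
but not in `K₀(F)`; in particular `K₀(F)` is not closed. -/
theorem K0_P3_not_closed :
    (![(2 : ℂ) / (3 * (Real.sqrt 3 : ℂ)), 1, 0]) ∈ closure (K0 P3) ∧
    (![(2 : ℂ) / (3 * (Real.sqrt 3 : ℂ)), 1, 0]) ∉ K0 P3 ∧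
    ¬ IsClosed (K0 P3) := by
  set s : ℂ := (Real.sqrt 3 : ℂ)
  have hs0 : s ≠ 0 := by simp [s]
  have hs2 : s ^ 2 = 3 := by
    simp only [s, ← Complex.ofReal_pow, Real.sq_sqrt (by norm_num : (0 : ℝ) ≤ 3)]
    norm_num
  have hc : 3 * (-s⁻¹) ^ 2 = 1 := by field_simp; linear_combination -hs2
  have hpoint : 2 / (3 * s) = (-s⁻¹) ^ 3 - -s⁻¹ := by field_simp; linear_combination -hs2
  have hmem : ![2 / (3 * s), 1, 0] ∈ closure (K0 P3) := hpoint ▸ mem_closure_K0_P3 hc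
  have hnot : ![2 / (3 * s), 1, 0] ∉ K0 P3 := fun h =>
    notMem_range_evalMap_P3 (by simp [hs0]) one_ne_zero (Set.image_subset_range _ _ h)
  exact ⟨hmem, hnot, fun hcl => hnot (hcl.closure_eq ▸ hmem)⟩
end

section
/- Let F : ℂⁿ → ℂⁿ be a polynomial mapping each of whose leading forms F̂ᵢ has positive degree, and suppose X ⊆ ℂⁿ ≅ ℝ²ⁿ is an unbounded set such that F(X) is bounded. Then the common zero set V of the leading forms F̂₁,…,F̂ₙ (as real polynomial maps ℝ²ⁿ → ℝ²) satisfies V ∩ S²ⁿ⁻¹(0,1) ≠ ∅. -/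
/-! An unbounded set `X ⊆ ℂⁿ ≅ ℝ²ⁿ` has a nonzero direction `v` in its asymptotic cone: `X` contains
points `t • w` with `t → ∞` and `w → v`. Since the cone is invariant under positive scaling, `v`
may be taken on the unit sphere. For a coordinate `p` of `F` of degree `d ≥ 1`,
`p (t • w) = t ^ d * p̂ w + O(t ^ (d - 1))`, so boundedness of `p` on `X` forces `p̂ v = 0`. -/

open Filter Topology

/-- The leading form (homogeneous component of highest degree) of a polynomial. -/
noncomputable def leadingForm {ι : Type} [Fintype ι] {R : Type*} [CommSemiring R]
    (p : MvPolynomial ι R) : MvPolynomial ι R :=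
  MvPolynomial.homogeneousComponent p.totalDegree p

/-- The Euclidean norm of `x ∈ ℂⁿ ≅ ℝ²ⁿ`. -/
noncomputable def cEucNorm {n : ℕ} (x : Fin n → ℂ) : ℝ :=
  Real.sqrt (∑ i, ‖x i‖ ^ 2)

open MvPolynomial Bornology AffineSpace

namespace MvPolynomial

variable {σ R : Type*} [CommSemiring R]

theorem IsHomogeneous.eval_smul {φ : MvPolynomial σ R} {d : ℕ} (hφ : φ.IsHomogeneous d)
    (c : R) (x : σ → R) : eval (c • x) φ = c ^ d * eval x φ := by
  rw [eval_eq, eval_eq, Finset.mul_sum]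
  refine Finset.sum_congr rfl fun m hm => ?_
  have hdeg : ∑ i ∈ m.support, m i = d := by
    rw [← Finsupp.degree_apply, Finsupp.degree_eq_weight_one]
    exact hφ (mem_support_iff.mp hm)
  simp only [Pi.smul_apply, smul_eq_mul, mul_pow, Finset.prod_mul_distrib,
    Finset.prod_pow_eq_pow_sum, hdeg]
  ring

theorem eval_smul_eq_sum_homogeneousComponent (p : MvPolynomial σ R) (c : R) (x : σ → R) :
    eval (c • x) p =
      ∑ j ∈ Finset.range (p.totalDegree + 1), c ^ j * eval x (homogeneousComponent j p) := by
  conv_lhs => rw [← sum_homogeneousComponent p]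
  rw [map_sum]
  exact Finset.sum_congr rfl fun j _ => (homogeneousComponent_isHomogeneous j p).eval_smul c x

end MvPolynomial

theorem eval_leadingForm_eq_inv_pow_mul_sub {K : Type*} [Field K] {ι : Type} [Fintype ι]
    (p : MvPolynomial ι K) {c : K} (hc : c ≠ 0) (u : ι → K) :
    eval u (leadingForm p) = c⁻¹ ^ p.totalDegree * eval (c • u) p -
      ∑ j ∈ Finset.range p.totalDegree,
        c⁻¹ ^ (p.totalDegree - j) * eval u (homogeneousComponent j p) := by
  set d := p.totalDegree
  have hsum : ∑ j ∈ Finset.range d, c⁻¹ ^ (d - j) * eval u (homogeneousComponent j p) =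
      c⁻¹ ^ d * ∑ j ∈ Finset.range d, c ^ j * eval u (homogeneousComponent j p) := by
    rw [Finset.mul_sum]
    refine Finset.sum_congr rfl fun j hj => ?_
    rw [pow_sub₀ _ (inv_ne_zero hc) (Finset.mem_range.mp hj).le, inv_pow c j, inv_inv, mul_assoc]
  rw [hsum, eval_smul_eq_sum_homogeneousComponent, Finset.sum_range_succ, leadingForm, mul_add,
    inv_pow, inv_mul_cancel_left₀ (pow_ne_zero d hc)]
  ring

theorem eval_leadingForm_eq_zero_of_tendsto {𝕜 : Type*} [NormedField 𝕜] {ι : Type} [Fintype ι]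
    {α : Type*} {l : Filter α} [l.NeBot] {p : MvPolynomial ι 𝕜} (hp : 0 < p.totalDegree)
    {c : α → 𝕜} {u : α → ι → 𝕜} {a : ι → 𝕜} (hc : Tendsto c l (cobounded 𝕜))
    (hu : Tendsto u l (𝓝 a)) (hb : IsBoundedUnder (· ≤ ·) l fun k => ‖eval (c k • u k) p‖) :
    eval a (leadingForm p) = 0 := by
  set d := p.totalDegree
  have hinv : Tendsto (fun k => (c k)⁻¹) l (𝓝 0) := tendsto_inv₀_cobounded.comp hc
  have hinv_pow : ∀ m, 0 < m → Tendsto (fun k => (c k)⁻¹ ^ m) l (𝓝 0) := fun m hm => by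
    simpa [zero_pow hm.ne'] using hinv.pow m
  have hlower : Tendsto (fun k => ∑ j ∈ Finset.range d,
      (c k)⁻¹ ^ (d - j) * eval (u k) (homogeneousComponent j p)) l (𝓝 0) := by
    simpa using tendsto_finsetSum _ fun j hj =>
      (hinv_pow _ (Nat.sub_pos_of_lt (Finset.mem_range.mp hj))).mul
        ((continuous_eval _).tendsto a |>.comp hu)
  have hrhs := ((hinv_pow d hp).zero_mul_isBoundedUnder_le hb).sub hlower
  rw [sub_zero] at hrhs
  refine tendsto_nhds_unique ((continuous_eval _).tendsto a |>.comp hu) (hrhs.congr' ?_)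
  filter_upwards [hc.eventually_ne_cobounded 0] with k hk
  exact (eval_leadingForm_eq_inv_pow_mul_sub p hk (u k)).symm

theorem eval_leadingForm_eq_zero_of_mem_asymptoticCone {𝕜 : Type*} [NormedField 𝕜]
    [NormedAlgebra ℝ 𝕜] {ι : Type} [Fintype ι] {p : MvPolynomial ι 𝕜} (hp : 0 < p.totalDegree)
    {X : Set (ι → 𝕜)} (hX : IsBounded ((fun x => eval x p) '' X)) {v : ι → 𝕜}
    (hv : v ∈ asymptoticCone ℝ X) : eval v (leadingForm p) = 0 := by
  -- `hv` becomes: `q.1 • q.2 ∈ X` frequently as `q.1 → ∞` and `q.2 → v`.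
  rw [mem_asymptoticCone_iff, asymptoticNhds_eq_smul, ← map₂_smul, ← map_prod_eq_map₂,
    frequently_map] at hv
  let l := atTop ×ˢ 𝓝 v ⊓ 𝓟 {q : ℝ × (ι → 𝕜) | q.1 • q.2 ∈ X}
  have : l.NeBot := frequently_mem_iff_neBot.mp hv
  have hX' : ∀ᶠ q in l, q.1 • q.2 ∈ X := mem_inf_of_right (mem_principal_self _)
  obtain ⟨C, hC⟩ := isBounded_iff_forall_norm_le.mp hX
  refine eval_leadingForm_eq_zero_of_tendsto hp (l := l) (c := fun q => algebraMap ℝ 𝕜 q.1)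
    ?_ (tendsto_snd.mono_left inf_le_left) ?_
  · rw [← tendsto_norm_atTop_iff_cobounded]
    simp only [norm_algebraMap', Real.norm_eq_abs]
    exact tendsto_abs_atTop_atTop.comp (tendsto_fst.mono_left inf_le_left)
  · refine isBoundedUnder_of_eventually_le (a := C) ?_
    filter_upwards [hX'] with q hq
    rw [algebraMap_smul]
    exact hC _ ⟨_, hq, rfl⟩

theorem cEucNorm_eq_norm_toLp {n : ℕ} (x : Fin n → ℂ) :
    cEucNorm x = ‖(WithLp.toLp 2 x : EuclideanSpace ℂ (Fin n))‖ :=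
  (EuclideanSpace.norm_eq _).symm

theorem cEucNorm_pos {n : ℕ} {x : Fin n → ℂ} (hx : x ≠ 0) : 0 < cEucNorm x := by
  rw [cEucNorm_eq_norm_toLp]
  exact norm_pos_iff.mpr (by simpa using hx)

theorem cEucNorm_inv_smul_self {n : ℕ} {x : Fin n → ℂ} (hx : x ≠ 0) :
    cEucNorm ((cEucNorm x)⁻¹ • x) = 1 := by
  rw [cEucNorm_eq_norm_toLp, cEucNorm_eq_norm_toLp, WithLp.toLp_smul]
  exact norm_smul_inv_norm (by simpa using hx)

/-- if the leading forms of `F` have positive degree, `X ⊆ ℂⁿ` is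
unbounded and `F(X)` is bounded, then the common zero set `V` of the leading
forms meets the unit sphere `S²ⁿ⁻¹(0,1)`. -/
theorem leading_zero_meets_sphere {n : ℕ} (P : Fin n → MvPolynomial (Fin n) ℂ)
    (hdeg : ∀ i, 0 < (P i).totalDegree) (X : Set (Fin n → ℂ))
    (hub : ¬ Bornology.IsBounded X)
    (hb : Bornology.IsBounded (evalMap P '' X)) :
    ∃ x : Fin n → ℂ,
      (∀ i, MvPolynomial.eval x (leadingForm (P i)) = 0) ∧ cEucNorm x = 1 := by
  obtain ⟨v, hv0, hv⟩ := not_bounded_iff_exists_ne_zero_mem_asymptoticCone.mp hub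
  have hw : (cEucNorm v)⁻¹ • v ∈ asymptoticCone ℝ X :=
    (smul_mem_asymptoticCone_iff (inv_pos.mpr (cEucNorm_pos hv0))).mpr hv
  refine ⟨_, fun i => eval_leadingForm_eq_zero_of_mem_asymptoticCone (hdeg i) ?_ hw,
    cEucNorm_inv_smul_self hv0⟩
  simpa only [Set.image_image, evalMap] using (LipschitzWith.eval i).isBounded_image hb
end
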